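/- arXiv:1002.3881 — 6 statements merged into one kernel-verified Lean document; each statement's English description precedes it below -/
import Mathlib

section
/- Define g(z) = -log(β(1 - e^{-z})) where β(u) = (u + sqrt(u(4-3u)))/2. Then g is decreasing on (0,∞), and for sufficiently small z > 0, log(1/sqrt(z)) - sqrt(z) ≤ g(z) ≤ log(1/sqrt(z)) + z. -/
/-!
Since `β` is increasing on `[0, 1)` and `z ↦ 1 - e^{-z}` maps `(0, ∞)` increasingly into
`(0, 1)`, `g` is decreasing. For the bounds, `√u ≤ β(u) ≤ √u + u/2` on `[0, 1]`, and
`u = 1 - e^{-z}` satisfies `z e^{-z} ≤ u ≤ z`; hence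
`√z e^{-z} ≤ β(u) ≤ √z + z/2 ≤ √z e^{√z}`, and taking `-log` gives the two estimates,
in fact for every `z > 0`.
-/

noncomputable def beta (u : ℝ) : ℝ := (u + Real.sqrt (u * (4 - 3 * u))) / 2

noncomputable def gfun (z : ℝ) : ℝ := -Real.log (beta (1 - Real.exp (-z)))

open Real Set

lemma beta_pos {u : ℝ} (hu : 0 < u) : 0 < beta u := by
  unfold beta
  positivity

-- `u (4 - 3u) - (3u - 2)² = 4 (3u - 1)(1 - u)`
lemma three_mul_sub_two_lt_sqrt {u : ℝ} (h1 : u < 1) :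
    3 * u - 2 < √(u * (4 - 3 * u)) := by
  rcases lt_or_ge (3 * u - 2) 0 with hneg | hnonneg
  · exact hneg.trans_le (sqrt_nonneg _)
  · exact lt_sqrt_of_sq_lt (by nlinarith)

-- With `a = √(u(4-3u))`, `b = √(v(4-3v))`: `(b - a + v - u)(a + b) = (v - u)(4 - 3u - 3v + a + b)`,
-- and the last factor is positive by `three_mul_sub_two_lt_sqrt`.
lemma beta_strictMonoOn : StrictMonoOn beta (Ico 0 1) := by
  rintro u ⟨hu0, hu1⟩ v ⟨hv0, hv1⟩ huv
  set a := √(u * (4 - 3 * u))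
  set b := √(v * (4 - 3 * v))
  have ha_sq : a ^ 2 = u * (4 - 3 * u) := sq_sqrt (by nlinarith)
  have hb_sq : b ^ 2 = v * (4 - 3 * v) := sq_sqrt (by nlinarith)
  have ha := three_mul_sub_two_lt_sqrt hu1
  have hb := three_mul_sub_two_lt_sqrt hv1
  have hb_pos : 0 < b := sqrt_pos.mpr (by nlinarith)
  have hab_pos : 0 < a + b := by positivity
  have hprod : 0 < (b - a + (v - u)) * (a + b) := by nlinarith
  have := (pos_iff_pos_of_mul_pos hprod).mpr hab_pos
  unfold beta
  linarith

lemma sqrt_le_beta {u : ℝ} (h0 : 0 ≤ u) (h1 : u ≤ 1) : √u ≤ beta u := by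
  set s := √u
  have hs0 : 0 ≤ s := sqrt_nonneg u
  have hs_sq : s ^ 2 = u := sq_sqrt h0
  have hs1 : s ≤ 1 := sqrt_le_one.mpr h1
  have : 2 * s - s ^ 2 ≤ √(u * (4 - 3 * u)) := by
    apply le_sqrt_of_sq_le
    nlinarith [mul_nonneg (pow_nonneg hs0 3) (sub_nonneg.mpr hs1)]
  unfold beta
  linarith

lemma beta_le_sqrt_add_half {u : ℝ} (h0 : 0 ≤ u) : beta u ≤ √u + u / 2 := by
  have : √(u * (4 - 3 * u)) ≤ 2 * √u :=
    calc √(u * (4 - 3 * u)) ≤ √(2 ^ 2 * u) := sqrt_le_sqrt (by nlinarith)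
      _ = 2 * √u := by rw [sqrt_mul (by positivity), sqrt_sq zero_le_two]
  unfold beta
  linarith

lemma one_sub_exp_neg_mem_Ioo {z : ℝ} (hz : 0 < z) : 1 - exp (-z) ∈ Ioo 0 1 := by
  constructor
  · linarith [exp_lt_one_iff.mpr (neg_neg_of_pos hz)]
  · linarith [exp_pos (-z)]

lemma mul_exp_neg_le_one_sub_exp_neg (z : ℝ) : z * exp (-z) ≤ 1 - exp (-z) := by
  have : (z + 1) * exp (-z) ≤ 1 := by
    calc (z + 1) * exp (-z) ≤ exp z * exp (-z) := by gcongr; exact add_one_le_exp z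
      _ = 1 := by rw [← exp_add, add_neg_cancel, exp_zero]
  linarith

lemma one_sub_exp_neg_le (z : ℝ) : 1 - exp (-z) ≤ z := by
  linarith [add_one_le_exp (-z)]

theorem gfun_strictAntiOn : StrictAntiOn gfun (Ioi 0) := by
  intro x hx y hy hxy
  have hux := one_sub_exp_neg_mem_Ioo hx
  have huy := one_sub_exp_neg_mem_Ioo hy
  have : beta (1 - exp (-x)) < beta (1 - exp (-y)) :=
    beta_strictMonoOn ⟨hux.1.le, hux.2⟩ ⟨huy.1.le, huy.2⟩ (by gcongr)
  exact neg_lt_neg (log_lt_log (beta_pos hux.1) this)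

lemma sqrt_mul_exp_neg_le_beta {z : ℝ} (hz : 0 < z) :
    √z * exp (-z) ≤ beta (1 - exp (-z)) := by
  have hu := one_sub_exp_neg_mem_Ioo hz
  calc √z * exp (-z) ≤ √z * exp (-z / 2) := by gcongr; linarith
    _ = √(z * exp (-z)) := by rw [exp_half, sqrt_mul hz.le]
    _ ≤ √(1 - exp (-z)) := sqrt_le_sqrt (mul_exp_neg_le_one_sub_exp_neg z)
    _ ≤ beta (1 - exp (-z)) := sqrt_le_beta hu.1.le hu.2.le

lemma beta_le_sqrt_mul_exp_sqrt {z : ℝ} (hz : 0 < z) :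
    beta (1 - exp (-z)) ≤ √z * exp √z := by
  have hu := one_sub_exp_neg_mem_Ioo hz
  have hz_sq : √z * √z = z := mul_self_sqrt hz.le
  calc beta (1 - exp (-z)) ≤ √(1 - exp (-z)) + (1 - exp (-z)) / 2 := beta_le_sqrt_add_half hu.1.le
    _ ≤ √z + z / 2 := by gcongr <;> exact one_sub_exp_neg_le z
    _ ≤ √z * (√z + 1) := by nlinarith [sqrt_nonneg z]
    _ ≤ √z * exp √z := by gcongr; exact add_one_le_exp _

lemma log_inv_sqrt_sub_sqrt_le_gfun {z : ℝ} (hz : 0 < z) :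
    log (1 / √z) - √z ≤ gfun z := by
  have := log_le_log (beta_pos (one_sub_exp_neg_mem_Ioo hz).1) (beta_le_sqrt_mul_exp_sqrt hz)
  rw [log_mul (sqrt_pos.mpr hz).ne' (exp_pos _).ne', log_exp] at this
  rw [gfun, one_div, log_inv]
  linarith

lemma gfun_le_log_inv_sqrt_add {z : ℝ} (hz : 0 < z) :
    gfun z ≤ log (1 / √z) + z := by
  have := log_le_log (by positivity) (sqrt_mul_exp_neg_le_beta hz)
  rw [log_mul (sqrt_pos.mpr hz).ne' (exp_pos _).ne', log_exp] at this
  rw [gfun, one_div, log_inv]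
  linarith

/-- `g` is decreasing on `(0,∞)`, and for sufficiently small `z > 0` we have
`log(1/√z) - √z ≤ g(z) ≤ log(1/√z) + z`. -/
theorem stmt3 :
    StrictAntiOn gfun (Set.Ioi 0) ∧
    ∃ z0 : ℝ, 0 < z0 ∧ ∀ z : ℝ, 0 < z → z ≤ z0 →
      Real.log (1 / Real.sqrt z) - Real.sqrt z ≤ gfun z ∧
      gfun z ≤ Real.log (1 / Real.sqrt z) + z :=
  ⟨gfun_strictAntiOn, 1, one_pos, fun _ hz _ =>
    ⟨log_inv_sqrt_sub_sqrt_le_gfun hz, gfun_le_log_inv_sqrt_add hz⟩⟩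
end

section
/- With g(z) = -log(β(1 - e^{-z})) and β(u) = (u + sqrt(u(4-3u)))/2, there exists a constant C > 0 such that for every 0 < a < ∞, ∫_0^a g(z) dz ≤ (a/2)·log(1 + 1/a) + C·a. -/
open MeasureTheory

/-! Since `u (4 - 3u) ≥ u` on `[0, 1]`, we have `β(u) ≥ √u / 2`; together with
`1 - e^{-z} ≥ z / (1 + z)` this gives `g(z) ≤ log 2 + (log (1 + z) - log z) / 2`, whose
integral over `(0, a)` is explicit through `∫ log = x log x - x`. As `β ≤ 1`, also `g ≥ 0`, so
the same bound makes `g` integrable near `0`. -/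

open Real Set

lemma beta_nonneg {u : ℝ} (hu : 0 ≤ u) : 0 ≤ beta u := by
  unfold beta; positivity

lemma beta_le_one {u : ℝ} (hu : u ≤ 2) : beta u ≤ 1 := by
  have hsqrt : √(u * (4 - 3 * u)) ≤ 2 - u :=
    Real.sqrt_le_iff.mpr ⟨by linarith, by nlinarith [sq_nonneg (1 - u)]⟩
  unfold beta; linarith

lemma sqrt_div_two_le_beta {u : ℝ} (hu0 : 0 ≤ u) (hu1 : u ≤ 1) : √u / 2 ≤ beta u := by
  have hsqrt : √u ≤ √(u * (4 - 3 * u)) := Real.sqrt_le_sqrt (by nlinarith)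
  unfold beta; linarith

lemma div_one_add_le_one_sub_exp_neg {z : ℝ} (hz : -1 < z) : z / (1 + z) ≤ 1 - exp (-z) := by
  have h1z : 0 < 1 + z := by linarith
  have hexp : exp (-z) ≤ (1 + z)⁻¹ := by
    rw [exp_neg]
    exact inv_anti₀ h1z (by linarith [add_one_le_exp z])
  calc z / (1 + z) = 1 - (1 + z)⁻¹ := by field_simp; ring
    _ ≤ 1 - exp (-z) := by linarith

lemma gfun_nonneg {z : ℝ} (hz : 0 ≤ z) : 0 ≤ gfun z := by
  have hu0 : 0 ≤ 1 - exp (-z) := sub_nonneg.mpr (exp_le_one_iff.mpr (by linarith))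
  have hu1 : 1 - exp (-z) ≤ 2 := by linarith [exp_pos (-z)]
  exact neg_nonneg.mpr (log_nonpos (beta_nonneg hu0) (beta_le_one hu1))

lemma gfun_le {z : ℝ} (hz : 0 < z) : gfun z ≤ log 2 + (log (1 + z) - log z) / 2 := by
  set u := 1 - exp (-z)
  have hzu : z / (1 + z) ≤ u := div_one_add_le_one_sub_exp_neg (by linarith)
  have hu0 : 0 < u := lt_of_lt_of_le (by positivity) hzu
  have hu1 : u ≤ 1 := by linarith [exp_pos (-z)]
  have hlog_beta : log (√u / 2) ≤ log (beta u) :=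
    log_le_log (by positivity) (sqrt_div_two_le_beta hu0.le hu1)
  have hlog_sqrt : log (√u / 2) = log u / 2 - log 2 := by
    rw [log_div (by positivity) two_ne_zero, log_sqrt hu0.le]
  have hlog_u : log z - log (1 + z) ≤ log u := by
    rw [← log_div hz.ne' (by linarith)]
    exact log_le_log (by positivity) hzu
  unfold gfun
  linarith

lemma measurable_gfun : Measurable gfun := by
  unfold gfun beta; fun_prop

lemma intervalIntegrable_log_one_add (a : ℝ) :
    IntervalIntegrable (fun z => log (1 + z)) volume 0 a := by
  simpa using (intervalIntegral.intervalIntegrable_log' (a := 1) (b := 1 + a)).comp_add_left 1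

lemma intervalIntegrable_log_one_add_sub_log (a : ℝ) :
    IntervalIntegrable (fun z => log (1 + z) - log z) volume 0 a :=
  (intervalIntegrable_log_one_add a).sub intervalIntegral.intervalIntegrable_log'

lemma integral_log_one_add_sub_log (a : ℝ) :
    ∫ z in (0 : ℝ)..a, (log (1 + z) - log z) = (1 + a) * log (1 + a) - a * log a := by
  rw [intervalIntegral.integral_sub (intervalIntegrable_log_one_add a)
      intervalIntegral.intervalIntegrable_log',
    intervalIntegral.integral_comp_add_left, integral_log, integral_log]
  simp only [add_zero, log_one, mul_zero, zero_mul]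
  ring

lemma one_add_mul_log_one_add_sub_mul_log_le {a : ℝ} (ha : 0 < a) :
    (1 + a) * log (1 + a) - a * log a ≤ a * log (1 + 1 / a) + a := by
  have hsplit : log (1 + 1 / a) = log (1 + a) - log a := by
    rw [← log_div (by linarith) ha.ne']
    congr 1
    field_simp
    ring
  have hlog : log (1 + a) ≤ a := by linarith [log_le_sub_one_of_pos (by linarith : 0 < 1 + a)]
  rw [hsplit]
  linarith

lemma integrableOn_gfun (a : ℝ) : IntegrableOn gfun (Ioo 0 a) := by
  have hbound : IntegrableOn (fun z => log 2 + (log (1 + z) - log z) / 2) (Ioo 0 a) :=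
    ((intervalIntegrable_const.add
      ((intervalIntegrable_log_one_add_sub_log a).div_const 2)).1).mono_set Ioo_subset_Ioc_self
  refine hbound.mono' measurable_gfun.aestronglyMeasurable ?_
  filter_upwards [ae_restrict_mem measurableSet_Ioo] with z hz
  rw [norm_of_nonneg (gfun_nonneg hz.1.le)]
  exact gfun_le hz.1

/-- There is a constant `C > 0` such that `∫_0^a g ≤ (a/2)·log(1 + 1/a) + C·a`
for every `0 < a < ∞`. -/
theorem stmt4 :
    ∃ C : ℝ, 0 < C ∧ ∀ a : ℝ, 0 < a →
      ∫ z in Set.Ioo (0 : ℝ) a, gfun z ≤ a / 2 * Real.log (1 + 1 / a) + C * a := by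
  refine ⟨log 2 + 1 / 2, by positivity, fun a ha => ?_⟩
  have hbound : IntervalIntegrable (fun z => log 2 + (log (1 + z) - log z) / 2) volume 0 a :=
    intervalIntegrable_const.add ((intervalIntegrable_log_one_add_sub_log a).div_const 2)
  calc ∫ z in Ioo 0 a, gfun z
      ≤ ∫ z in Ioo 0 a, (log 2 + (log (1 + z) - log z) / 2) :=
        setIntegral_mono_on (integrableOn_gfun a) (hbound.1.mono_set Ioo_subset_Ioc_self)
          measurableSet_Ioo fun z hz => gfun_le hz.1
    _ = a * log 2 + ((1 + a) * log (1 + a) - a * log a) / 2 := by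
        rw [← integral_Ioc_eq_integral_Ioo, ← intervalIntegral.integral_of_le ha.le,
          intervalIntegral.integral_add intervalIntegrable_const
            ((intervalIntegrable_log_one_add_sub_log a).div_const 2),
          intervalIntegral.integral_div, integral_log_one_add_sub_log]
        simp
    _ ≤ a / 2 * log (1 + 1 / a) + (log 2 + 1 / 2) * a := by
        linarith [one_add_mul_log_one_add_sub_mul_log_le ha]
end

section
/- With g(z) = -log(β(1 - e^{-z})) and β(u) = (u + sqrt(u(4-3u)))/2, we have ∫_0^∞ g(z) dz = π²/18. -/
/-!
Substitute `z = log (quad w) - log (1 - w)` for `w ∈ (0, 1)`, where `quad w = w² - w + 1`.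
Then `1 - e^{-z} = w² / quad w` and `β (1 - e^{-z}) = w / quad w`, so the integral becomes
`∫₀¹ (log (quad w) - log w) dz(w)`. Because `quad (1 - w) = quad w` and
`quad w = (1 - w)(1 - w⁶) / ((1 - w²)(1 - w³))`, this integrand has an explicit antiderivative
built from the dilogarithm `Li₂ x = ∑ xⁿ / n²`, and its increment over `[0, 1]` is
`Li₂ 1 / 3 = ζ(2) / 3 = π² / 18`.
-/

open MeasureTheory

open Real Set Filter Topology

noncomputable def dilog (x : ℝ) : ℝ := ∑' n : ℕ, x ^ (n + 1) / ((n : ℝ) + 1) ^ 2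

lemma hasSum_inv_succ_sq : HasSum (fun n : ℕ => 1 / ((n : ℝ) + 1) ^ 2) (π ^ 2 / 6) := by
  have h := (hasSum_nat_add_iff (f := fun n : ℕ => 1 / (n : ℝ) ^ 2) 1).mpr
    (by simpa using hasSum_zeta_two)
  simpa using h

lemma dilog_zero : dilog 0 = 0 := by simp [dilog]

lemma dilog_one : dilog 1 = π ^ 2 / 6 := by simpa [dilog] using hasSum_inv_succ_sq.tsum_eq

lemma continuousOn_dilog : ContinuousOn dilog (Icc (-1) 1) := by
  refine continuousOn_tsum (fun n => by fun_prop) hasSum_inv_succ_sq.summable fun n x hx => ?_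
  rw [norm_div, norm_pow, norm_pow, Real.norm_of_nonneg n.cast_add_one_pos.le]
  gcongr
  exact pow_le_one₀ (norm_nonneg x) (abs_le.mpr hx)

lemma hasDerivAt_dilog {x : ℝ} (hx0 : x ≠ 0) (hx : |x| < 1) :
    HasDerivAt dilog (-log (1 - x) / x) x := by
  obtain ⟨r, hxr, hr1⟩ := exists_between hx
  have hr0 : 0 < r := (abs_nonneg x).trans_lt hxr
  have hterm (n : ℕ) (y : ℝ) : HasDerivAt (fun y : ℝ => y ^ (n + 1) / ((n : ℝ) + 1) ^ 2)
      (y ^ n / ((n : ℝ) + 1)) y := by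
    refine ((hasDerivAt_pow (n + 1) y).div_const (((n : ℝ) + 1) ^ 2)).congr_deriv ?_
    push_cast
    field_simp
  have hbound (n : ℕ) (y : ℝ) (hy : y ∈ Ioo (-r) r) : ‖y ^ n / ((n : ℝ) + 1)‖ ≤ r ^ n := by
    rw [norm_div, norm_pow, Real.norm_of_nonneg n.cast_add_one_pos.le]
    calc ‖y‖ ^ n / ((n : ℝ) + 1) ≤ ‖y‖ ^ n := div_le_self (by positivity) (by linarith)
      _ ≤ r ^ n := pow_le_pow_left₀ (norm_nonneg y) (abs_lt.mpr hy).le n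
  have hsum : HasSum (fun n : ℕ => x ^ n / ((n : ℝ) + 1)) (-log (1 - x) / x) := by
    refine ((hasSum_pow_div_log_of_abs_lt_one hx).div_const x).congr_fun fun n => ?_
    field_simp
    ring
  rw [← hsum.tsum_eq]
  exact hasDerivAt_tsum_of_isPreconnected (summable_geometric_of_lt_one hr0.le hr1)
    isOpen_Ioo isPreconnected_Ioo (fun n y _ => hterm n y) hbound
    (show (0 : ℝ) ∈ Ioo (-r) r from ⟨neg_lt_zero.mpr hr0, hr0⟩) (by simp) (abs_lt.mp hxr)

lemma hasDerivAt_dilog_pow_div {x : ℝ} (hx0 : x ≠ 0) (hx : |x| < 1) {n : ℕ} (hn : n ≠ 0) :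
    HasDerivAt (fun y => dilog (y ^ n) / n) (-log (1 - x ^ n) / x) x := by
  have hxn : |x ^ n| < 1 := by rw [abs_pow]; exact pow_lt_one₀ (abs_nonneg x) hx hn
  refine (((hasDerivAt_dilog (pow_ne_zero n hx0) hxn).comp x (hasDerivAt_pow n x)).div_const
    (n : ℝ)).congr_deriv ?_
  obtain ⟨m, rfl⟩ := Nat.exists_eq_succ_of_ne_zero hn
  field_simp
  rw [Nat.succ_sub_one, pow_succ']
  ring

def quad (w : ℝ) : ℝ := w ^ 2 - w + 1

lemma quad_pos (w : ℝ) : 0 < quad w := by unfold quad; nlinarith [sq_nonneg (2 * w - 1)]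

lemma quad_one_sub (w : ℝ) : quad (1 - w) = quad w := by unfold quad; ring

lemma hasDerivAt_log_quad (w : ℝ) :
    HasDerivAt (fun w => log (quad w)) ((2 * w - 1) / quad w) w := by
  have hquad : HasDerivAt (fun w : ℝ => w ^ 2 - w + 1) (2 * w - 1) w :=
    (((hasDerivAt_pow 2 w).sub (hasDerivAt_id w)).add_const 1).congr_deriv (by simp)
  exact hquad.log (quad_pos w).ne'

lemma continuous_log_quad : Continuous fun w => log (quad w) :=
  continuous_iff_continuousAt.mpr fun w => (hasDerivAt_log_quad w).continuousAt

lemma continuous_log_quad_mul_log : Continuous fun w => log (quad w) * log w := by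
  refine continuous_iff_continuousAt.mpr fun w => ?_
  rcases eq_or_ne w 0 with rfl | hw
  · -- near `0`, `log (quad w) ≈ -w` and `w * log w → 0`
    rw [← continuousWithinAt_compl_self, ContinuousWithinAt]
    have hslope := hasDerivAt_iff_tendsto_slope.mp (hasDerivAt_log_quad 0)
    have hmul : Tendsto (fun w : ℝ => w * log w) (𝓝[≠] 0) (𝓝 0) := by
      simpa using (continuous_mul_log.tendsto 0).mono_left nhdsWithin_le_nhds
    refine ((hslope.mul hmul).congr' ?_).trans_eq (by simp [quad])
    filter_upwards [self_mem_nhdsWithin] with w (hw : w ≠ 0)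
    simp only [slope_def_field, quad]
    norm_num
    field_simp
  · exact continuous_log_quad.continuousAt.mul (continuousAt_log hw)

lemma log_quad_eq_dilog_logs {v : ℝ} (hv : |v| < 1) :
    log (1 - v) + log (1 - v ^ 6) - log (1 - v ^ 2) - log (1 - v ^ 3) = log (quad v) := by
  obtain ⟨hv₁, hv₂⟩ := abs_lt.mp hv
  have h₁ : 1 - v ≠ 0 := by linarith
  have h₂ : 1 + v ≠ 0 := by linarith
  have h₃ : 1 - v ^ 3 ≠ 0 := by
    rw [show 1 - v ^ 3 = (1 - v) * quad (-v) by unfold quad; ring]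
    exact mul_ne_zero h₁ (quad_pos _).ne'
  rw [show 1 - v ^ 6 = (1 - v ^ 3) * ((1 + v) * quad v) by unfold quad; ring,
    show 1 - v ^ 2 = (1 - v) * (1 + v) by ring, log_mul h₃ (mul_ne_zero h₂ (quad_pos v).ne'),
    log_mul h₂ (quad_pos v).ne', log_mul h₁ h₂]
  ring

noncomputable def logQuadDivAntideriv (v : ℝ) : ℝ :=
  dilog (v ^ 2) / 2 + dilog (v ^ 3) / 3 - dilog v - dilog (v ^ 6) / 6

lemma hasDerivAt_logQuadDivAntideriv {v : ℝ} (hv0 : v ≠ 0) (hv : |v| < 1) :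
    HasDerivAt logQuadDivAntideriv (log (quad v) / v) v := by
  refine ((((hasDerivAt_dilog_pow_div hv0 hv two_ne_zero).add
    (hasDerivAt_dilog_pow_div hv0 hv three_ne_zero)).sub (hasDerivAt_dilog hv0 hv)).sub
    (hasDerivAt_dilog_pow_div hv0 hv (by norm_num : 6 ≠ 0))).congr_deriv ?_
  rw [← log_quad_eq_dilog_logs hv]
  ring

lemma continuousOn_logQuadDivAntideriv : ContinuousOn logQuadDivAntideriv (Icc (-1) 1) := by
  have hpow (n : ℕ) : ContinuousOn (fun v : ℝ => dilog (v ^ n)) (Icc (-1) 1) :=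
    continuousOn_dilog.comp (continuous_pow n).continuousOn fun v hv =>
      abs_le.mp (by rw [abs_pow]; exact pow_le_one₀ (abs_nonneg v) (abs_le.mpr hv))
  exact ((((hpow 2).div_const _).add ((hpow 3).div_const _)).sub continuousOn_dilog).sub
    ((hpow 6).div_const _)

lemma logQuadDivAntideriv_zero : logQuadDivAntideriv 0 = 0 := by
  simp [logQuadDivAntideriv, dilog_zero]

lemma logQuadDivAntideriv_one : logQuadDivAntideriv 1 = -(π ^ 2 / 18) := by
  simp only [logQuadDivAntideriv, one_pow, dilog_one]
  ring

noncomputable def zParam (w : ℝ) : ℝ := log (quad w) - log (1 - w)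

lemma hasDerivAt_zParam {w : ℝ} (hw : w < 1) :
    HasDerivAt zParam (w * (2 - w) / ((1 - w) * quad w)) w := by
  refine ((hasDerivAt_log_quad w).sub (((hasDerivAt_id w).const_sub 1).log
    (sub_ne_zero.mpr hw.ne'))).congr_deriv ?_
  have h₁ : 1 - w ≠ 0 := sub_ne_zero.mpr hw.ne'
  simp only [id]
  field_simp [(quad_pos w).ne']
  unfold quad
  ring

lemma zParam_deriv_pos {w : ℝ} (hw : w ∈ Ioo (0 : ℝ) 1) :
    0 < w * (2 - w) / ((1 - w) * quad w) := by
  obtain ⟨hw₀, hw₁⟩ := hw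
  exact div_pos (mul_pos hw₀ (by linarith)) (mul_pos (by linarith) (quad_pos w))

lemma strictMonoOn_zParam : StrictMonoOn zParam (Ioo 0 1) :=
  strictMonoOn_of_hasDerivWithinAt_pos (convex_Ioo 0 1)
    (fun _ hw => (hasDerivAt_zParam hw.2).continuousAt.continuousWithinAt)
    (fun _ hw => (hasDerivAt_zParam (interior_subset hw).2).hasDerivWithinAt)
    (fun _ hw => zParam_deriv_pos (interior_subset hw))

lemma zParam_pos {w : ℝ} (hw : w ∈ Ioo (0 : ℝ) 1) : 0 < zParam w := by
  obtain ⟨hw₀, hw₁⟩ := hw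
  refine sub_pos.mpr (log_lt_log (by linarith) ?_)
  unfold quad
  nlinarith

lemma tendsto_zParam_nhdsGT_zero : Tendsto zParam (𝓝[>] 0) (𝓝 0) := by
  have hcont : ContinuousAt zParam 0 :=
    (hasDerivAt_zParam zero_lt_one).continuousAt
  simpa [zParam, quad] using hcont.tendsto.mono_left nhdsWithin_le_nhds

lemma tendsto_zParam_nhdsLT_one : Tendsto zParam (𝓝[<] 1) atTop := by
  have hquad : Tendsto (fun w => log (quad w)) (𝓝[<] 1) (𝓝 0) := by
    simpa [quad] using (continuous_log_quad.tendsto 1).mono_left nhdsWithin_le_nhds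
  have hsub : Tendsto (fun w : ℝ => 1 - w) (𝓝[<] 1) (𝓝[>] 0) := by
    refine tendsto_nhdsWithin_of_tendsto_nhds_of_eventually_within _ ?_ ?_
    · have h : Tendsto (fun w : ℝ => 1 - w) (𝓝 1) (𝓝 (1 - 1)) :=
        tendsto_const_nhds.sub tendsto_id
      simpa using h.mono_left nhdsWithin_le_nhds
    · filter_upwards [self_mem_nhdsWithin] with w (hw : w < 1)
      exact sub_pos.mpr hw
  exact hquad.add_atTop (tendsto_neg_atBot_atTop.comp (tendsto_log_nhdsGT_zero.comp hsub))

lemma zParam_image : zParam '' Ioo 0 1 = Ioi 0 := by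
  refine (image_subset_iff.mpr fun w hw => zParam_pos hw).antisymm ?_
  exact isPreconnected_Ioo.intermediate_value_Ioi
    (le_principal_iff.mpr (Ioo_mem_nhdsGT zero_lt_one))
    (le_principal_iff.mpr (Ioo_mem_nhdsLT zero_lt_one))
    (fun w hw => (hasDerivAt_zParam hw.2).continuousAt.continuousWithinAt)
    tendsto_zParam_nhdsGT_zero tendsto_zParam_nhdsLT_one

lemma gfun_zParam {w : ℝ} (hw : w ∈ Ioo (0 : ℝ) 1) :
    gfun (zParam w) = log (quad w) - log w := by
  obtain ⟨hw₀, hw₁⟩ := hw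
  have hq := quad_pos w
  have hexp : 1 - exp (-zParam w) = w ^ 2 / quad w := by
    rw [zParam, neg_sub, exp_sub, exp_log (by linarith), exp_log hq]
    field_simp
    unfold quad
    ring
  have hsqrt : w ^ 2 / quad w * (4 - 3 * (w ^ 2 / quad w)) = (w * (2 - w) / quad w) ^ 2 := by
    field_simp
    unfold quad
    ring
  have hbeta : beta (w ^ 2 / quad w) = w / quad w := by
    rw [beta, hsqrt, sqrt_sq (div_nonneg (mul_nonneg hw₀.le (by linarith)) hq.le)]
    field_simp
    ring
  rw [gfun, hexp, hbeta, log_div hw₀.ne' hq.ne']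
  ring

noncomputable def transformedAntideriv (w : ℝ) : ℝ :=
  log (quad w) ^ 2 / 2 - log (quad w) * log w + logQuadDivAntideriv w
    - logQuadDivAntideriv (1 - w) - dilog (1 - w)

lemma hasDerivAt_transformedAntideriv {w : ℝ} (hw : w ∈ Ioo (0 : ℝ) 1) :
    HasDerivAt transformedAntideriv
      (w * (2 - w) / ((1 - w) * quad w) * (log (quad w) - log w)) w := by
  obtain ⟨hw₀, hw₁⟩ := hw
  have h₀ : w ≠ 0 := hw₀.ne'
  have h₁ : 1 - w ≠ 0 := sub_ne_zero.mpr hw₁.ne'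
  have habs : |w| < 1 := abs_lt.mpr ⟨by linarith, hw₁⟩
  have habs' : |1 - w| < 1 := abs_lt.mpr ⟨by linarith, by linarith⟩
  have hL := hasDerivAt_log_quad w
  have hflip := (hasDerivAt_id w).const_sub 1
  refine (((((hL.pow 2).div_const 2).sub (hL.mul (hasDerivAt_log h₀))).add
    (hasDerivAt_logQuadDivAntideriv h₀ habs)).sub
    ((hasDerivAt_logQuadDivAntideriv h₁ habs').comp w hflip)).sub
    ((hasDerivAt_dilog h₁ habs').comp w hflip) |>.congr_deriv ?_
  rw [quad_one_sub, sub_sub_cancel]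
  field_simp [(quad_pos w).ne']
  unfold quad
  ring

lemma continuousOn_transformedAntideriv : ContinuousOn transformedAntideriv (Icc 0 1) := by
  have hflip : MapsTo (fun w : ℝ => 1 - w) (Icc 0 1) (Icc (-1) 1) :=
    fun w hw => ⟨by linarith [hw.2], by linarith [hw.1]⟩
  have hsub : Icc (0 : ℝ) 1 ⊆ Icc (-1) 1 := Icc_subset_Icc_left (by norm_num)
  exact (((((continuous_log_quad.pow 2).div_const 2).sub
    continuous_log_quad_mul_log).continuousOn.add (continuousOn_logQuadDivAntideriv.mono hsub)).sub
    (continuousOn_logQuadDivAntideriv.comp (by fun_prop) hflip)).sub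
    (continuousOn_dilog.comp (by fun_prop) hflip)

lemma transformedAntideriv_one_sub_transformedAntideriv_zero :
    transformedAntideriv 1 - transformedAntideriv 0 = π ^ 2 / 18 := by
  simp only [transformedAntideriv, quad, sub_self, sub_zero, logQuadDivAntideriv_zero,
    logQuadDivAntideriv_one, dilog_zero, dilog_one]
  norm_num
  ring

lemma integral_transformedIntegrand :
    ∫ w in Ioo (0 : ℝ) 1, w * (2 - w) / ((1 - w) * quad w) * (log (quad w) - log w)
      = π ^ 2 / 18 := by
  have hnonneg : ∀ w ∈ Ioo (0 : ℝ) 1,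
      0 ≤ w * (2 - w) / ((1 - w) * quad w) * (log (quad w) - log w) := fun w hw =>
    mul_nonneg (zParam_deriv_pos hw).le
      (sub_nonneg.mpr (log_le_log hw.1 (by unfold quad; nlinarith [sq_nonneg (w - 1)])))
  have hint := intervalIntegral.integrableOn_deriv_of_nonneg continuousOn_transformedAntideriv
    (fun _ => hasDerivAt_transformedAntideriv) hnonneg
  rw [← integral_Ioc_eq_integral_Ioo, ← intervalIntegral.integral_of_le zero_le_one,
    intervalIntegral.integral_eq_sub_of_hasDeriv_right_of_le zero_le_one
      continuousOn_transformedAntideriv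
      (fun _ hw => (hasDerivAt_transformedAntideriv hw).hasDerivWithinAt)
      ((intervalIntegrable_iff_integrableOn_Ioc_of_le zero_le_one).mpr hint),
    transformedAntideriv_one_sub_transformedAntideriv_zero]

/-- `∫_0^∞ g(z) dz = π²/18`. -/
theorem stmt5 : ∫ z in Set.Ioi (0 : ℝ), gfun z = Real.pi ^ 2 / 18 := by
  rw [← zParam_image, integral_image_eq_integral_abs_deriv_smul measurableSet_Ioo
    (fun w hw => (hasDerivAt_zParam hw.2).hasDerivWithinAt) strictMonoOn_zParam.injOn,
    ← integral_transformedIntegrand]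
  refine setIntegral_congr_fun measurableSet_Ioo fun w hw => ?_
  rw [abs_of_pos (zParam_deriv_pos hw), gfun_zParam hw, smul_eq_mul]
end

section
/- Let m ≥ (a+b)/2 be an integer and suppose 6aq < 1/2 with p ∈ (0,1), q = -log(1-p), a ≤ b positive integers. Then the sum over m ≥ (a+b)/2 of binom(ab, m)·p^m is at most (6aq)^{(a+b)/2}, provided ap is sufficiently small. -/
/-!
Bounding `C(ab, m) ≤ (e·ab/m)^m` and using `b ≤ 2m` gives `C(ab, m) p^m ≤ (2e·ap)^m` for every
index of the sum, so the sum is at most the geometric tail `y^k / (1 - y)` with `y = 2e·ap` and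
`k = ⌈(a+b)/2⌉`. Writing `y = (e/3)·(6ap)`, the factor `(e/3)^k ≤ e/3 < 1` absorbs `1/(1 - y)` once
`ap` is small; finally `p ≤ q` and `6aq ≤ 1` let the exponent drop from `k` to `(a+b)/2`.
-/

open Real Finset

lemma pow_div_factorial_le_exp_one_pow (m : ℕ) : (m : ℝ) ^ m / m.factorial ≤ exp 1 ^ m := by
  rw [← exp_nat_mul, mul_one]
  exact Real.pow_div_factorial_le_exp _ m.cast_nonneg m

lemma choose_mul_pow_le_exp_one_mul_pow {n m : ℕ} {x y : ℝ} (hx : 0 ≤ x)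
    (h : n * x ≤ y * m) : (n.choose m : ℝ) * x ^ m ≤ (exp 1 * y) ^ m := by
  rcases Nat.eq_zero_or_pos m with rfl | hm
  · simp
  have hy : 0 ≤ y :=
    nonneg_of_mul_nonneg_left ((by positivity : (0 : ℝ) ≤ n * x).trans h) (by exact_mod_cast hm)
  calc (n.choose m : ℝ) * x ^ m ≤ (n : ℝ) ^ m / m.factorial * x ^ m := by
        gcongr; exact Nat.choose_le_pow_div m n
    _ = (n * x) ^ m / m.factorial := by ring
    _ ≤ (y * m) ^ m / m.factorial := by gcongr
    _ = y ^ m * ((m : ℝ) ^ m / m.factorial) := by ring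
    _ ≤ y ^ m * exp 1 ^ m := by gcongr; exact pow_div_factorial_le_exp_one_pow m
    _ = (exp 1 * y) ^ m := by ring

lemma sum_filter_le_geom_tail {N k : ℕ} {P : ℕ → Prop} [DecidablePred P] {f : ℕ → ℝ} {y : ℝ}
    (hy₀ : 0 ≤ y) (hy₁ : y < 1) (hPk : ∀ m, P m → k ≤ m) (hf : ∀ m, P m → f m ≤ y ^ m) :
    ∑ m ∈ (range N).filter P, f m ≤ y ^ k / (1 - y) := by
  have hsub : (range N).filter P ⊆ Ico k N := fun m hm => by
    rw [mem_filter, mem_range] at hm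
    exact mem_Ico.2 ⟨hPk m hm.2, hm.1⟩
  calc ∑ m ∈ (range N).filter P, f m ≤ ∑ m ∈ (range N).filter P, y ^ m :=
        sum_le_sum fun m hm => hf m (mem_filter.1 hm).2
    _ ≤ ∑ m ∈ Ico k N, y ^ m := sum_le_sum_of_subset_of_nonneg hsub fun _ _ _ => by positivity
    _ ≤ y ^ k / (1 - y) := geom_sum_Ico_le_of_lt_one hy₀ hy₁

lemma mul_pow_div_one_sub_le_pow {r z : ℝ} {k : ℕ} (hr : 0 < r) (hz : 0 ≤ z)
    (h : r ≤ 1 - r * z) (hk : k ≠ 0) : (r * z) ^ k / (1 - r * z) ≤ z ^ k := by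
  have hr₁ : r ≤ 1 := h.trans (by nlinarith)
  rw [div_le_iff₀ (hr.trans_le h), mul_pow]
  calc r ^ k * z ^ k ≤ r * z ^ k := by gcongr; exact pow_le_of_le_one hr.le hr₁ hk
    _ ≤ z ^ k * (1 - r * z) := by nlinarith [pow_nonneg hz k]

lemma choose_mul_mul_pow_le {a b m : ℕ} {p : ℝ} (hp : 0 ≤ p) (hm : a + b ≤ 2 * m) :
    ((a * b).choose m : ℝ) * p ^ m ≤ (2 * exp 1 * (a * p)) ^ m := by
  have hb : (b : ℝ) ≤ 2 * m := by exact_mod_cast (by omega : b ≤ 2 * m)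
  rw [mul_assoc 2, mul_left_comm]
  refine choose_mul_pow_le_exp_one_mul_pow hp ?_
  push_cast
  nlinarith [mul_nonneg (Nat.cast_nonneg a : (0 : ℝ) ≤ a) hp]

/-- For positive integers `a ≤ b`, `p ∈ (0,1)` with `ap` sufficiently small,
`q = -log(1-p)` and `6aq < 1/2`, the union-bound sum
`∑_{m ≥ (a+b)/2} C(ab,m) p^m` is at most `(6aq)^{(a+b)/2}`. -/
theorem stmt9 :
    ∃ δ : ℝ, 0 < δ ∧ ∀ a b : ℕ, 0 < a → a ≤ b → ∀ p : ℝ, 0 < p → p < 1 →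
      (a : ℝ) * p ≤ δ → 6 * (a : ℝ) * (-Real.log (1 - p)) < 1 / 2 →
      ∑ m ∈ (Finset.range (a * b + 1)).filter (fun m => a + b ≤ 2 * m),
          ((a * b).choose m : ℝ) * p ^ m
        ≤ (6 * (a : ℝ) * (-Real.log (1 - p))) ^ (((a : ℝ) + (b : ℝ)) / 2) := by
  refine ⟨1 / 100, by norm_num, fun a b ha _ p hp hp₁ hδ h6 => ?_⟩
  set k := (a + b + 1) / 2
  have hap : 0 ≤ (a : ℝ) * p := by positivity
  have he : exp 1 < 2.7182818286 := exp_one_lt_d9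
  have hpq : p ≤ -log (1 - p) := by linarith [log_le_sub_one_of_pos (by linarith : 0 < 1 - p)]
  have hk : ((a : ℝ) + b) / 2 ≤ k := by
    rw [div_le_iff₀ two_pos]; exact_mod_cast (by omega : a + b ≤ k * 2)
  calc _ ≤ (2 * exp 1 * (a * p)) ^ k / (1 - 2 * exp 1 * (a * p)) :=
        sum_filter_le_geom_tail (by positivity) (by nlinarith) (fun m hm => by omega)
          fun m hm => choose_mul_mul_pow_le hp.le hm
    _ = (exp 1 / 3 * (6 * a * p)) ^ k / (1 - exp 1 / 3 * (6 * a * p)) := by ring_nf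
    _ ≤ (6 * a * p) ^ k :=
        mul_pow_div_one_sub_le_pow (by positivity) (by positivity) (by nlinarith) (by omega)
    _ ≤ (6 * a * -log (1 - p)) ^ k := by gcongr
    _ ≤ _ := by
        rw [← rpow_natCast]
        exact rpow_le_rpow_of_exponent_ge' (mul_nonneg (by positivity) (hp.le.trans hpq))
          (by linarith) (by positivity) hk
end

section
/- In a good hierarchy H for (T,Z) with 4T ≤ 1 and Z ≥ 6, every vertex is either a seed (leaf) or lies above at least one large seed, where a large seed is a seed u with φ(R_u) ≥ Z/3. -/
def nbr (v w : ℤ × ℤ) : Prop := |w.1 - v.1| + |w.2 - v.2| = 1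

def bootClosure (A : Set (ℤ × ℤ)) : Set (ℤ × ℤ) :=
  ⋂₀ {B | A ⊆ B ∧ ∀ v : ℤ × ℤ, 2 ≤ ({w | nbr v w} ∩ B).ncard → v ∈ B}

/-- An axis-parallel rectangle in `ℤ²`. -/
structure Rect where
  x0 : ℤ
  y0 : ℤ
  x1 : ℤ
  y1 : ℤ
  hx : x0 ≤ x1
  hy : y0 ≤ y1

def Rect.width (R : Rect) : ℤ := R.x1 - R.x0 + 1
def Rect.height (R : Rect) : ℤ := R.y1 - R.y0 + 1
/-- The semi-perimeter. -/
def Rect.phi (R : Rect) : ℤ := R.width + R.height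
/-- The shorter side length. -/
def Rect.short (R : Rect) : ℤ := min R.width R.height
def Rect.toSet (R : Rect) : Set (ℤ × ℤ) :=
  {v | R.x0 ≤ v.1 ∧ v.1 ≤ R.x1 ∧ R.y0 ≤ v.2 ∧ v.2 ≤ R.y1}
/-- Containment of rectangles. -/
def Rect.sub (S R : Rect) : Prop := R.x0 ≤ S.x0 ∧ S.x1 ≤ R.x1 ∧ R.y0 ≤ S.y0 ∧ S.y1 ≤ R.y1

/-- `d(S,R) = max_j (dim_j R - dim_j S)/dim_j R`. -/
noncomputable def rdist (S R : Rect) : ℝ :=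
  max (((R.width - S.width : ℤ) : ℝ) / ((R.width : ℤ) : ℝ))
      (((R.height - S.height : ℤ) : ℝ) / ((R.height : ℤ) : ℝ))

/-- A hierarchy: a finite rooted tree, each vertex labelled by a rectangle,
with at most two children per vertex. -/
inductive Hier where
  | seed : Rect → Hier
  | one : Rect → Hier → Hier
  | two : Rect → Hier → Hier → Hier

def Hier.rect : Hier → Rect
  | seed R => R
  | one R _ => R
  | two R _ _ => R

/-- The height of a hierarchy: the maximum distance from the root to a leaf. -/
def Hier.height : Hier → ℕ
  | seed _ => 0
  | one _ c => c.height + 1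
  | two _ c d => max c.height d.height + 1

/-- A hierarchy is good for `(T,Z)`: seeds are exactly the vertices whose
rectangle has short side `≤ Z`; a single child `v` of `u` satisfies
`d(R_v,R_u) ≤ 2T`, and moreover `T ≤ d(R_v,R_u)` when `v` itself has exactly one
child; the two children `v,w` of a doubly-branching vertex `u` satisfy
`d ≥ T` and `[R_v ∪ R_w] = R_u`. -/
def good (T Z : ℝ) : Hier → Prop
  | .seed R => ((R.short : ℤ) : ℝ) ≤ Z
  | .one R c => Z < ((R.short : ℤ) : ℝ) ∧ c.rect.sub R ∧
      (match c with
        | .one _ _ => T ≤ rdist c.rect R ∧ rdist c.rect R ≤ 2 * T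
        | _ => rdist c.rect R ≤ 2 * T) ∧
      good T Z c
  | .two R c d => Z < ((R.short : ℤ) : ℝ) ∧ c.rect.sub R ∧ d.rect.sub R ∧
      T ≤ rdist c.rect R ∧ T ≤ rdist d.rect R ∧
      bootClosure (c.rect.toSet ∪ d.rect.toSet) = R.toSet ∧
      good T Z c ∧ good T Z d


/-- `Hier.Sub H' H` : `H'` is a subtree (vertex) of `H`. -/
inductive Hier.Sub : Hier → Hier → Prop
  | refl (H : Hier) : Hier.Sub H H
  | one (R : Rect) (c H : Hier) : Hier.Sub H c → Hier.Sub H (.one R c)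
  | left (R : Rect) (c d H : Hier) : Hier.Sub H c → Hier.Sub H (.two R c d)
  | right (R : Rect) (c d H : Hier) : Hier.Sub H d → Hier.Sub H (.two R c d)

/-- Whether the root of a hierarchy is a seed (leaf). -/
def Hier.isSeed : Hier → Prop
  | seed _ => True
  | _ => False

/-- The subtree contains a large seed, i.e. a seed `u` with `φ(R_u) ≥ Z/3`. -/
def anyLargeSeed (Z : ℝ) : Hier → Prop
  | .seed R => Z / 3 ≤ ((R.phi : ℤ) : ℝ)
  | .one _ c => anyLargeSeed Z c
  | .two _ c d => anyLargeSeed Z c ∨ anyLargeSeed Z d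

/-! A vertex with a single seed child inherits a semi-perimeter `≥ (1 - 2T)φ(R_u) > Z`. A vertex
with two seed children has `φ(R_v) + φ(R_w) ≥ φ(R_u) - 2 > 2Z - 2 ≥ 2Z/3`: the 2-neighbour
closure of two rectangles can only fill a gap of width at most two between their projections on
either axis, because half-planes and strips of width two are closed under the growth rule.
Every other non-seed vertex has a non-seed child, and induction takes over. -/

open Set

def IsBootClosed (B : Set (ℤ × ℤ)) : Prop :=
  ∀ v : ℤ × ℤ, 2 ≤ ({w | nbr v w} ∩ B).ncard → v ∈ B

/-- Closedness under the one-dimensional 2-neighbour rule. -/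
def FillsUnitGaps (I : Set ℤ) : Prop :=
  ∀ x : ℤ, x - 1 ∈ I → x + 1 ∈ I → x ∈ I

lemma subset_bootClosure (A : Set (ℤ × ℤ)) : A ⊆ bootClosure A :=
  subset_sInter fun _ hB => hB.1

lemma bootClosure_subset {A B : Set (ℤ × ℤ)} (hAB : A ⊆ B) (hB : IsBootClosed B) :
    bootClosure A ⊆ B :=
  sInter_subset_of_mem ⟨hAB, hB⟩

lemma nbr_swap_iff {v w : ℤ × ℤ} : nbr v.swap w.swap ↔ nbr v w := by
  simp only [nbr, Prod.fst_swap, Prod.snd_swap, add_comm]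

lemma eq_of_nbr {v w : ℤ × ℤ} (h : nbr v w) :
    w = (v.1 + 1, v.2) ∨ w = (v.1 - 1, v.2) ∨ w = (v.1, v.2 + 1) ∨ w = (v.1, v.2 - 1) := by
  obtain ⟨w1, w2⟩ := w
  simp only [nbr] at h
  simp only [Prod.mk.injEq]
  rcases abs_cases (w1 - v.1) with ⟨h1, h1'⟩ | ⟨h1, h1'⟩ <;>
    rcases abs_cases (w2 - v.2) with ⟨h2, h2'⟩ | ⟨h2, h2'⟩ <;> omega

lemma isBootClosed_of_forall_not_mem {B : Set (ℤ × ℤ)}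
    (h : ∀ v ∉ B, ∃ p, {w | nbr v w} ∩ B ⊆ {p}) : IsBootClosed B := by
  intro v hv
  by_contra hvB
  obtain ⟨p, hp⟩ := h v hvB
  have := ncard_le_ncard hp
  rw [ncard_singleton] at this
  omega

lemma IsBootClosed.preimage_swap {B : Set (ℤ × ℤ)} (hB : IsBootClosed B) :
    IsBootClosed (Prod.swap ⁻¹' B) := by
  intro v hv
  apply hB v.swap
  have hset : {w | nbr v w} ∩ Prod.swap ⁻¹' B = Prod.swap ⁻¹' ({w | nbr v.swap w} ∩ B) := by
    ext w
    simp only [mem_inter_iff, mem_ofPred_eq, mem_preimage, ← nbr_swap_iff (v := v.swap),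
      Prod.swap_swap]
  rwa [hset, ncard_preimage_of_injective_subset_range Prod.swap_injective
    (by rw [Prod.swap_surjective.range_eq]; exact subset_univ _)] at hv

lemma isBootClosed_preimage_fst {I : Set ℤ} (hI : FillsUnitGaps I) :
    IsBootClosed (Prod.fst ⁻¹' I) := by
  refine isBootClosed_of_forall_not_mem fun v hv => ?_
  by_cases hleft : v.1 - 1 ∈ I
  · refine ⟨(v.1 - 1, v.2), fun w ⟨hw, hwI⟩ => ?_⟩
    rcases eq_of_nbr hw with rfl | rfl | rfl | rfl
    · exact absurd (hI v.1 hleft hwI) hv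
    all_goals first | rfl | exact absurd hwI hv
  · refine ⟨(v.1 + 1, v.2), fun w ⟨hw, hwI⟩ => ?_⟩
    rcases eq_of_nbr hw with rfl | rfl | rfl | rfl
    · rfl
    · exact absurd hwI hleft
    all_goals exact absurd hwI hv

lemma isBootClosed_preimage_snd {I : Set ℤ} (hI : FillsUnitGaps I) :
    IsBootClosed (Prod.snd ⁻¹' I) :=
  (isBootClosed_preimage_fst hI).preimage_swap

lemma fillsUnitGaps_Icc (a b : ℤ) : FillsUnitGaps (Icc a b) := by
  intro x h1 h2
  simp only [mem_Icc] at *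
  omega

lemma fillsUnitGaps_compl_Ioo (a : ℤ) : FillsUnitGaps {x | x ≤ a ∨ a + 3 ≤ x} := by
  intro x h1 h2
  simp only [mem_ofPred_eq] at *
  omega

lemma Int.sub_le_of_forall_fillsUnitGaps {a b c d p q : ℤ} (hab : a ≤ b) (hcd : c ≤ d)
    (hsub : Icc a b ∪ Icc c d ⊆ Icc p q)
    (hcl : ∀ I, FillsUnitGaps I → Icc a b ∪ Icc c d ⊆ I → Icc p q ⊆ I) :
    q - p ≤ b - a + (d - c) + 2 := by
  have hpa := (hsub (Or.inl (left_mem_Icc.2 hab))).1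
  have hbq := (hsub (Or.inl (right_mem_Icc.2 hab))).2
  have hpc := (hsub (Or.inr (left_mem_Icc.2 hcd))).1
  have hdq := (hsub (Or.inr (right_mem_Icc.2 hcd))).2
  have hbox := hcl _ (fillsUnitGaps_Icc (min a c) (max b d)) <| union_subset
    (Icc_subset_Icc (min_le_left a c) (le_max_left b d))
    (Icc_subset_Icc (min_le_right a c) (le_max_right b d))
  have hp := (hbox (left_mem_Icc.2 (by omega))).1
  have hq := (hbox (right_mem_Icc.2 (by omega))).2
  have no_gap_after : ∀ e, p ≤ e + 1 → e + 1 ≤ q →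
      ¬ Icc a b ∪ Icc c d ⊆ {x | x ≤ e ∨ e + 3 ≤ x} := fun e h1 h2 hI => by
    have := hcl _ (fillsUnitGaps_compl_Ioo e) hI ⟨h1, h2⟩
    simp only [mem_ofPred_eq] at this
    omega
  by_contra hlt
  rcases (by omega : b + 3 ≤ c ∨ d + 3 ≤ a) with h | h
  · refine no_gap_after b (by omega) (by omega) fun x hx => ?_
    simp only [mem_union, mem_Icc, mem_ofPred_eq] at hx ⊢
    omega
  · refine no_gap_after d (by omega) (by omega) fun x hx => ?_
    simp only [mem_union, mem_Icc, mem_ofPred_eq] at hx ⊢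
    omega

lemma Rect.image_fst_toSet (R : Rect) : Prod.fst '' R.toSet = Icc R.x0 R.x1 := by
  ext x
  constructor
  · rintro ⟨v, ⟨h0, h1, -, -⟩, rfl⟩
    exact ⟨h0, h1⟩
  · rintro ⟨h0, h1⟩
    exact ⟨(x, R.y0), ⟨h0, h1, le_rfl, R.hy⟩, rfl⟩

lemma Rect.image_snd_toSet (R : Rect) : Prod.snd '' R.toSet = Icc R.y0 R.y1 := by
  ext y
  constructor
  · rintro ⟨v, ⟨-, -, h0, h1⟩, rfl⟩
    exact ⟨h0, h1⟩
  · rintro ⟨h0, h1⟩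
    exact ⟨(R.x0, y), ⟨le_rfl, R.hx, h0, h1⟩, rfl⟩

lemma sub_le_of_bootClosure_eq {f : ℤ × ℤ → ℤ}
    (hf : ∀ I, FillsUnitGaps I → IsBootClosed (f ⁻¹' I)) {A A' B : Set (ℤ × ℤ)}
    (h : bootClosure (A ∪ A') = B) {a b c d p q : ℤ} (hab : a ≤ b) (hcd : c ≤ d)
    (hA : f '' A = Icc a b) (hA' : f '' A' = Icc c d) (hB : f '' B = Icc p q) :
    q - p ≤ b - a + (d - c) + 2 := by
  refine Int.sub_le_of_forall_fillsUnitGaps hab hcd ?_ fun I hI hAI => ?_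
  · rw [← hA, ← hA', ← image_union, ← hB, ← h]
    exact image_mono (subset_bootClosure _)
  · rw [← hA, ← hA', ← image_union] at hAI
    rw [← hB, ← h]
    exact image_subset_iff.2 (bootClosure_subset (image_subset_iff.1 hAI) (hf I hI))

theorem Rect.phi_le_of_bootClosure_eq {S S' R : Rect}
    (h : bootClosure (S.toSet ∪ S'.toSet) = R.toSet) : R.phi ≤ S.phi + S'.phi + 2 := by
  have hx := sub_le_of_bootClosure_eq (fun _ => isBootClosed_preimage_fst) h S.hx S'.hx
    S.image_fst_toSet S'.image_fst_toSet R.image_fst_toSet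
  have hy := sub_le_of_bootClosure_eq (fun _ => isBootClosed_preimage_snd) h S.hy S'.hy
    S.image_snd_toSet S'.image_snd_toSet R.image_snd_toSet
  simp only [Rect.phi, Rect.width, Rect.height]
  omega

lemma Rect.width_pos (R : Rect) : 0 < R.width := by
  have := R.hx
  simp only [Rect.width]
  omega

lemma Rect.height_pos (R : Rect) : 0 < R.height := by
  have := R.hy
  simp only [Rect.height]
  omega

lemma Rect.two_mul_short_le_phi (R : Rect) : 2 * R.short ≤ R.phi := by
  have := min_le_left R.width R.height
  have := min_le_right R.width R.height
  simp only [Rect.short, Rect.phi]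
  omega

lemma Rect.one_sub_mul_phi_le_phi {S R : Rect} {t : ℝ} (h : rdist S R ≤ t) :
    (1 - t) * R.phi ≤ S.phi := by
  have hw : (0 : ℝ) < R.width := by exact_mod_cast R.width_pos
  have hh : (0 : ℝ) < R.height := by exact_mod_cast R.height_pos
  have hdw := div_le_iff₀ hw |>.1 (le_trans (le_max_left _ _) h)
  have hdh := div_le_iff₀ hh |>.1 (le_trans (le_max_right _ _) h)
  push_cast [Rect.phi] at hdw hdh ⊢
  linarith

lemma good_of_sub {T Z : ℝ} {H' H : Hier} (h : H'.Sub H) (hg : good T Z H) : good T Z H' := by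
  induction h with
  | refl => exact hg
  | one _ _ _ _ ih => exact ih hg.2.2.2
  | left _ _ _ _ _ ih => exact ih hg.2.2.2.2.2.2.1
  | right _ _ _ _ _ ih => exact ih hg.2.2.2.2.2.2.2

lemma Hier.isSeed_iff_exists {H : Hier} : H.isSeed ↔ ∃ R, H = .seed R := by
  cases H <;> simp [Hier.isSeed]

lemma Rect.div_three_le_phi_of_rdist_le {T Z : ℝ} (h4T : 4 * T ≤ 1) (hZ : 0 ≤ Z) {S R : Rect}
    (hR : Z < R.short) (hd : rdist S R ≤ 2 * T) : Z / 3 ≤ S.phi := by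
  have hphi := S.one_sub_mul_phi_le_phi hd
  have hshort : (2 * R.short : ℝ) ≤ R.phi := by exact_mod_cast R.two_mul_short_le_phi
  nlinarith

lemma Rect.div_three_le_phi_or_of_bootClosure_eq {Z : ℝ} (hZ : 3 / 2 ≤ Z) {S S' R : Rect}
    (hR : Z < R.short) (h : bootClosure (S.toSet ∪ S'.toSet) = R.toSet) :
    Z / 3 ≤ S.phi ∨ Z / 3 ≤ S'.phi := by
  have hphi : (R.phi : ℝ) ≤ S.phi + S'.phi + 2 := by
    exact_mod_cast Rect.phi_le_of_bootClosure_eq h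
  have hshort : (2 * R.short : ℝ) ≤ R.phi := by exact_mod_cast R.two_mul_short_le_phi
  by_contra! hsmall
  linarith [hsmall.1, hsmall.2]

theorem isSeed_or_anyLargeSeed_of_good {T Z : ℝ} (h4T : 4 * T ≤ 1) (hZ : 3 / 2 ≤ Z) :
    ∀ {H : Hier}, good T Z H → H.isSeed ∨ anyLargeSeed Z H
  | .seed _, _ => Or.inl trivial
  | .one R c, ⟨hR, _, hd, hc⟩ => by
    refine Or.inr ((isSeed_or_anyLargeSeed_of_good h4T hZ hc).elim (fun hs => ?_) id)
    obtain ⟨S, rfl⟩ := Hier.isSeed_iff_exists.1 hs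
    exact Rect.div_three_le_phi_of_rdist_le h4T (by linarith) hR hd
  | .two R c d, ⟨hR, _, _, _, _, hb, hc, hd⟩ => by
    refine Or.inr ((isSeed_or_anyLargeSeed_of_good h4T hZ hc).elim (fun hsc => ?_) Or.inl)
    refine (isSeed_or_anyLargeSeed_of_good h4T hZ hd).elim (fun hsd => ?_) Or.inr
    obtain ⟨S, rfl⟩ := Hier.isSeed_iff_exists.1 hsc
    obtain ⟨S', rfl⟩ := Hier.isSeed_iff_exists.1 hsd
    exact Rect.div_three_le_phi_or_of_bootClosure_eq hZ hR hb

theorem stmt12_general (T Z : ℝ) (h4T : 4 * T ≤ 1) (hZ6 : 6 ≤ Z)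
    (H : Hier) (hg : good T Z H) (H' : Hier) (hsub : Hier.Sub H' H) :
    H'.isSeed ∨ anyLargeSeed Z H' :=
  isSeed_or_anyLargeSeed_of_good h4T (by linarith) (good_of_sub hsub hg)

/-- In a good hierarchy for `(T,Z)` with `4T ≤ 1` and `Z ≥ 6`, every vertex is
either a seed or lies above at least one large seed. -/
theorem stmt12 (T Z : ℝ) (hT0 : 0 < T) (h4T : 4 * T ≤ 1) (hZ6 : 6 ≤ Z)
    (H : Hier) (hg : good T Z H) (H' : Hier) (hsub : Hier.Sub H' H) :
    H'.isSeed ∨ anyLargeSeed Z H' :=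
  stmt12_general T Z h4T hZ6 H hg H' hsub
end

section
/- Let R = [m]×[n] and let A ⊆ R. Consider the bipartite graph G whose vertex set is the set of m rows and n columns of R, with an edge between row x and column y iff (x,y) ∈ A. If G is disconnected, then there exist a set X of rows and a set Y of columns such that A ⊆ S := (X × Y) ∪ (X^c × Y^c), S is closed under the Froböse bootstrap rule, and S ≠ R; hence A does not span R. -/
/-!
Let `u` be a vertex of the row–column graph and colour a row or column by whether it is reachable
from `u`. Every site of `A` joins a row and a column of the same colour, so `A` lies in the set `S`
of sites whose row and column have the same colour. The corner rule cannot leave `S`: if the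
three corners `(x+ε,y)`, `(x,y+δ)`, `(x+ε,y+δ)` are in `S`, the first and third force `y` and `y+δ`
to have the same colour, and the second then matches `x` with `y`. Finally `S = R` would make all
rows and columns share the colour of `u`, i.e. connect the graph.
-/

def rectZ (x0 y0 x1 y1 : ℤ) : Set (ℤ × ℤ) :=
  {v | x0 ≤ v.1 ∧ v.1 ≤ x1 ∧ y0 ≤ v.2 ∧ v.2 ≤ y1}

def frobClosure (R A : Set (ℤ × ℤ)) : Set (ℤ × ℤ) :=
  ⋂₀ {B | A ⊆ B ∧ ∀ v ∈ R,
    (∃ ε : ℤ, (ε = 1 ∨ ε = -1) ∧ ∃ δ : ℤ, (δ = 1 ∨ δ = -1) ∧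
      (v.1 + ε, v.2) ∈ B ∧ (v.1, v.2 + δ) ∈ B ∧ (v.1 + ε, v.2 + δ) ∈ B) → v ∈ B}

/-- The bipartite graph on the `m` rows and `n` columns of `[m] × [n]`, with an
edge between row `x` and column `y` iff `(x,y) ∈ A`. Row `i : Fin m` represents
the row `x = i + 1`, and similarly for columns. -/
def rowColGraph (m n : ℕ) (A : Set (ℤ × ℤ)) : SimpleGraph (Fin m ⊕ Fin n) where
  Adj u v :=
    (∃ (x : Fin m) (y : Fin n), u = Sum.inl x ∧ v = Sum.inr y ∧
      ((x : ℤ) + 1, (y : ℤ) + 1) ∈ A) ∨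
    (∃ (x : Fin m) (y : Fin n), u = Sum.inr y ∧ v = Sum.inl x ∧
      ((x : ℤ) + 1, (y : ℤ) + 1) ∈ A)
  symm := by
    constructor
    rintro u v (⟨x, y, rfl, rfl, h⟩ | ⟨x, y, rfl, rfl, h⟩)
    · exact Or.inr ⟨x, y, rfl, rfl, h⟩
    · exact Or.inl ⟨x, y, rfl, rfl, h⟩
  loopless := by
    constructor
    rintro u (⟨x, y, rfl, h, _⟩ | ⟨x, y, rfl, h, _⟩) <;> simp at h

/-- The set `S = (X × Y) ∪ (Xᶜ × Yᶜ)` inside the rectangle `[m] × [n]`. -/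
def frobS (m n : ℕ) (X Y : Set ℤ) : Set (ℤ × ℤ) :=
  {v ∈ rectZ 1 1 (m : ℤ) (n : ℤ) | (v.1 ∈ X ∧ v.2 ∈ Y) ∨ (v.1 ∉ X ∧ v.2 ∉ Y)}

def IsFrobClosed (R B : Set (ℤ × ℤ)) : Prop :=
  ∀ v ∈ R, (∃ ε : ℤ, (ε = 1 ∨ ε = -1) ∧ ∃ δ : ℤ, (δ = 1 ∨ δ = -1) ∧
    (v.1 + ε, v.2) ∈ B ∧ (v.1, v.2 + δ) ∈ B ∧ (v.1 + ε, v.2 + δ) ∈ B) → v ∈ B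

section frobClosure

variable {R A B : Set (ℤ × ℤ)}

theorem frobClosure_subset_of_isFrobClosed (hAB : A ⊆ B) (hB : IsFrobClosed R B) :
    frobClosure R A ⊆ B :=
  Set.sInter_subset_of_mem ⟨hAB, hB⟩

theorem subset_frobClosure : A ⊆ frobClosure R A :=
  Set.subset_sInter fun _ hB => hB.1

theorem frobClosure_eq_self (hA : IsFrobClosed R A) : frobClosure R A = A :=
  (frobClosure_subset_of_isFrobClosed subset_rfl hA).antisymm subset_frobClosure

end frobClosure

theorem isFrobClosed_frobS (m n : ℕ) (X Y : Set ℤ) :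
    IsFrobClosed (rectZ 1 1 m n) (frobS m n X Y) := by
  rintro v hv ⟨ε, -, δ, -, ⟨-, h₁⟩, ⟨-, h₂⟩, ⟨-, h₃⟩⟩
  exact ⟨hv, by tauto⟩

theorem frobS_subset_rectZ (m n : ℕ) (X Y : Set ℤ) : frobS m n X Y ⊆ rectZ 1 1 m n :=
  Set.sep_subset _ _

theorem exists_fin_of_mem_rectZ {m n : ℕ} {v : ℤ × ℤ} (hv : v ∈ rectZ 1 1 m n) :
    ∃ (i : Fin m) (j : Fin n), v = ((i : ℤ) + 1, (j : ℤ) + 1) := by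
  obtain ⟨x, y⟩ := v
  obtain ⟨hx₁, hxm, hy₁, hyn⟩ := hv
  refine ⟨⟨(x - 1).toNat, by omega⟩, ⟨(y - 1).toNat, by omega⟩, ?_⟩
  simp only [Prod.mk.injEq]
  omega

theorem mk_mem_rectZ {m n : ℕ} (i : Fin m) (j : Fin n) :
    ((i : ℤ) + 1, (j : ℤ) + 1) ∈ rectZ 1 1 m n := by
  refine ⟨?_, ?_, ?_, ?_⟩ <;> simp only <;> omega

theorem Sum.forall_of_forall_iff {α β : Type*} [Nonempty α] [Nonempty β] {p : α ⊕ β → Prop}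
    (h : ∀ a b, p (.inl a) ↔ p (.inr b)) {u : α ⊕ β} (hu : p u) : ∀ v, p v := by
  obtain ⟨a₀⟩ := ‹Nonempty α›
  obtain ⟨b₀⟩ := ‹Nonempty β›
  have hinl : ∀ a, p (.inl a) ↔ p (.inl a₀) := fun a => (h a b₀).trans (h a₀ b₀).symm
  have ha₀ : p (.inl a₀) := by
    rcases u with a | b
    · exact (hinl a).1 hu
    · exact (h a₀ b).2 hu
  rintro (a | b)
  · exact (hinl a).2 ha₀
  · exact (h a₀ b).1 ha₀

section colouring

variable {m n : ℕ} (p : Fin m ⊕ Fin n → Prop)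

def rowSet : Set ℤ := (fun i : Fin m => (i : ℤ) + 1) '' {i | p (.inl i)}

def colSet : Set ℤ := (fun j : Fin n => (j : ℤ) + 1) '' {j | p (.inr j)}

theorem mk_mem_frobS_iff (i : Fin m) (j : Fin n) :
    ((i : ℤ) + 1, (j : ℤ) + 1) ∈ frobS m n (rowSet p) (colSet p) ↔ (p (.inl i) ↔ p (.inr j)) := by
  have hinj : ∀ k : ℕ, Function.Injective (fun i : Fin k => (i : ℤ) + 1) := fun _ a b hab =>
    Fin.ext (by simpa using hab)
  change _ ∧ ((_ ∈ _ '' _ ∧ _ ∈ _ '' _) ∨ (_ ∉ _ '' _ ∧ _ ∉ _ '' _)) ↔ _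
  rw [(hinj m).mem_set_image, (hinj n).mem_set_image]
  simp only [mk_mem_rectZ, Set.mem_ofPred_eq, true_and]
  tauto

theorem subset_frobS_of_adj {A : Set (ℤ × ℤ)} (hA : A ⊆ rectZ 1 1 m n)
    (hp : ∀ u v, (rowColGraph m n A).Adj u v → (p u ↔ p v)) :
    A ⊆ frobS m n (rowSet p) (colSet p) := by
  intro v hv
  obtain ⟨i, j, rfl⟩ := exists_fin_of_mem_rectZ (hA hv)
  exact (mk_mem_frobS_iff p i j).2 (hp _ _ (Or.inl ⟨i, j, rfl, rfl, hv⟩))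

theorem frobS_ne_rectZ (hm : 0 < m) (hn : 0 < n) {u w : Fin m ⊕ Fin n} (hu : p u) (hw : ¬ p w) :
    frobS m n (rowSet p) (colSet p) ≠ rectZ 1 1 m n := by
  intro hS
  have : Nonempty (Fin m) := ⟨⟨0, hm⟩⟩
  have : Nonempty (Fin n) := ⟨⟨0, hn⟩⟩
  have h : ∀ i j, p (.inl i) ↔ p (.inr j) := fun i j =>
    (mk_mem_frobS_iff p i j).1 (hS ▸ mk_mem_rectZ i j)
  exact hw (Sum.forall_of_forall_iff h hu w)

end colouring

/-- If the row–column bipartite graph of `A ⊆ [m] × [n]` is disconnected, then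
there are sets `X` of rows and `Y` of columns such that
`A ⊆ S = (X × Y) ∪ (Xᶜ × Yᶜ)`, `S` is closed under the Froböse rule, and
`S ≠ R`; hence `A` does not span `R`. -/
theorem stmt19 (m n : ℕ) (hm : 0 < m) (hn : 0 < n) (A : Set (ℤ × ℤ))
    (hA : A ⊆ rectZ 1 1 (m : ℤ) (n : ℤ))
    (hdisc : ¬ (rowColGraph m n A).Connected) :
    ∃ X Y : Set ℤ,
      A ⊆ frobS m n X Y ∧
      frobClosure (rectZ 1 1 (m : ℤ) (n : ℤ)) (frobS m n X Y) = frobS m n X Y ∧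
      frobS m n X Y ≠ rectZ 1 1 (m : ℤ) (n : ℤ) ∧
      ¬ rectZ 1 1 (m : ℤ) (n : ℤ) ⊆ frobClosure (rectZ 1 1 (m : ℤ) (n : ℤ)) A := by
  set G := rowColGraph m n A
  have : Nonempty (Fin m ⊕ Fin n) := ⟨.inl ⟨0, hm⟩⟩
  obtain ⟨u, w, huw⟩ : ∃ u w, ¬ G.Reachable u w := by
    by_contra! h
    exact hdisc ⟨h⟩
  have hAS : A ⊆ frobS m n (rowSet (G.Reachable u)) (colSet (G.Reachable u)) :=
    subset_frobS_of_adj _ hA fun _ _ hadj =>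
      ⟨fun h => h.trans hadj.reachable, fun h => h.trans hadj.symm.reachable⟩
  have hSR := frobS_ne_rectZ _ hm hn (SimpleGraph.Reachable.refl u) huw
  refine ⟨_, _, hAS, frobClosure_eq_self (isFrobClosed_frobS m n _ _), hSR, fun hspan => ?_⟩
  exact hSR ((frobS_subset_rectZ m n _ _).antisymm
    (hspan.trans (frobClosure_subset_of_isFrobClosed hAS (isFrobClosed_frobS m n _ _))))
end
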